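/- Let F be a field of characteristic 0 and h ∈ F[x] nonzero. Then in A_h one has h·A_h = [x, A_h] = [ŷ, A_h] = [A_h, A_h]. -/
import Mathlib


open Polynomial FreeAlgebra

/-- The defining relation of `A_h`: `y * x = x * y + h(x)`. -/
inductive ahRel (F : Type) [Field F] (h : F[X]) :
    FreeAlgebra F (Fin 2) → FreeAlgebra F (Fin 2) → Prop
  | rel : ahRel F h (ι F 1 * ι F 0) (ι F 0 * ι F 1 + aeval (ι F 0) h)

/-- The algebra `A_h` generated by `x, y` with `yx - xy = h(x)`. -/
noncomputable abbrev AW (F : Type) [Field F] (h : F[X]) := RingQuot (ahRel F h)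

/-- The generator `x` of `A_h`. -/
noncomputable def aX (F : Type) [Field F] (h : F[X]) : AW F h :=
  RingQuot.mkAlgHom F (ahRel F h) (ι F 0)

/-- The generator `y` of `A_h`. -/
noncomputable def aY (F : Type) [Field F] (h : F[X]) : AW F h :=
  RingQuot.mkAlgHom F (ahRel F h) (ι F 1)

namespace AhAux

variable (F : Type) [Field F] (h : F[X])

/-- Evaluation of a polynomial at the generator `x`. -/
noncomputable abbrev ev (p : F[X]) : AW F h := aeval (aX F h) p

lemma rel1 : aY F h * aX F h = aX F h * aY F h + ev F h h := by
  have w := RingQuot.mkAlgHom_rel F (ahRel.rel (F := F) (h := h))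
  simp only [map_mul, map_add] at w
  rw [show (RingQuot.mkAlgHom F (ahRel F h)) ((aeval (ι F 0)) h)
      = ev F h h from (Polynomial.aeval_algHom_apply _ _ _).symm] at w
  exact w

lemma ev_mul (p q : F[X]) : ev F h (p * q) = ev F h p * ev F h q := map_mul _ _ _

lemma ev_add (p q : F[X]) : ev F h (p + q) = ev F h p + ev F h q := map_add _ _ _

lemma ev_comm (p q : F[X]) : ev F h p * ev F h q = ev F h q * ev F h p := by
  rw [← ev_mul, ← ev_mul, mul_comm]

lemma aX_eq : aX F h = ev F h Polynomial.X := (aeval_X _).symm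

lemma commXp (p : F[X]) : aX F h * ev F h p = ev F h p * aX F h := by
  rw [aX_eq]; exact ev_comm F h Polynomial.X p

lemma awMulNeg (a b : AW F h) : a * -b = -(a * b) := mul_neg a b

lemma awNegMul (a b : AW F h) : -a * b = -(a * b) := neg_mul a b

lemma awNegSmul (r : F) (x : AW F h) : (-r) • x = -(r • x) := neg_smul r x

lemma awTwoSmul (x : AW F h) : (2 : F) • x = x + x := two_smul F x

lemma awSubSmul (r s : F) (x : AW F h) : (r - s) • x = r • x - s • x := sub_smul r s x

lemma awOneSmul (x : AW F h) : (1 : F) • x = x := one_smul F x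

lemma awSmulSmul (r s : F) (x : AW F h) : r • (s • x) = (r * s) • x := smul_smul r s x

lemma awAddNeg (a b : AW F h) : a + -b = a - b := (sub_eq_add_neg a b).symm

lemma awNegSub (a b : AW F h) : -(a - b) = b - a := neg_sub a b

private lemma step_ring {A : Type} [Ring A] (Xx Yy P D Hh : A)
    (h1 : Yy * P = P * Yy + Hh * D) (h2 : Yy * Xx = Xx * Yy + Hh)
    (c2 : P * Hh = Hh * P) :
    Yy * (P * Xx) = (P * Xx) * Yy + Hh * (D * Xx + P) := by
  calc Yy * (P * Xx) = (Yy * P) * Xx := by rw [mul_assoc]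
    _ = (P * Yy + Hh * D) * Xx := by rw [h1]
    _ = P * (Yy * Xx) + Hh * (D * Xx) := by
        simp only [add_mul, mul_assoc]
    _ = P * (Xx * Yy + Hh) + Hh * (D * Xx) := by rw [h2]
    _ = (P * Xx) * Yy + P * Hh + Hh * (D * Xx) := by
        simp only [mul_add, mul_assoc]
    _ = (P * Xx) * Yy + Hh * (D * Xx + P) := by
        rw [c2]; simp only [mul_add]; abel

lemma yx_comm (p : F[X]) :
    aY F h * ev F h p = ev F h p * aY F h + ev F h h * ev F h (derivative p) := by
  induction p using Polynomial.induction_on with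
  | C a => simp [Algebra.commutes]
  | add p q hp hq =>
      rw [ev_add, derivative_add, ev_add, mul_add, mul_add, add_mul, hp, hq]
      abel
  | monomial n a hq =>
      have hrw : (C a : F[X]) * Polynomial.X ^ (n + 1)
          = (C a * Polynomial.X ^ n) * Polynomial.X := by ring
      rw [hrw, ev_mul, ← aX_eq]
      have hder : derivative ((C a * Polynomial.X ^ n) * Polynomial.X)
          = derivative (C a * Polynomial.X ^ n) * Polynomial.X + C a * Polynomial.X ^ n := by
        simp [derivative_mul]
      calc aY F h * (ev F h (C a * Polynomial.X ^ n) * aX F h)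
          = (ev F h (C a * Polynomial.X ^ n) * aX F h) * aY F h
            + ev F h h * (ev F h (derivative (C a * Polynomial.X ^ n)) * aX F h
              + ev F h (C a * Polynomial.X ^ n)) :=
            step_ring _ _ _ _ _ hq (rel1 F h) (ev_comm F h _ _)
        _ = (ev F h (C a * Polynomial.X ^ n) * aX F h) * aY F h
            + ev F h h * ev F h (derivative ((C a * Polynomial.X ^ n) * Polynomial.X)) := by
            rw [hder, ev_add, ev_mul F h (derivative (C a * Polynomial.X ^ n)) Polynomial.X, ← aX_eq]

lemma yH : aY F h * ev F h h = ev F h h * (aY F h + ev F h (derivative h)) := by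
  rw [yx_comm, mul_add]

/-- The filtration by `y`-degree. -/
noncomputable def em (j : ℕ) : Submodule F (AW F h) :=
  Submodule.span F {z | ∃ p : F[X], ∃ k, k ≤ j ∧ z = ev F h p * (aY F h) ^ k}

lemma mem_em {p : F[X]} {k j : ℕ} (hk : k ≤ j) : ev F h p * (aY F h) ^ k ∈ em F h j :=
  Submodule.subset_span ⟨p, k, hk, rfl⟩

lemma em_mono {i j : ℕ} (hij : i ≤ j) : em F h i ≤ em F h j :=
  Submodule.span_mono (fun z => fun ⟨p, k, hk, hz⟩ => ⟨p, k, hk.trans hij, hz⟩)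

lemma L1 (p : F[X]) {j : ℕ} : ∀ a ∈ em F h j, ev F h p * a ∈ em F h j := by
  intro a ha
  induction ha using Submodule.span_induction with
  | mem z hz =>
      obtain ⟨q, k, hk, rfl⟩ := hz
      rw [← mul_assoc, ← ev_mul]
      exact mem_em F h hk
  | zero => rw [mul_zero]; exact zero_mem _
  | add x y hx hy ihx ihy => rw [mul_add]; exact add_mem ihx ihy
  | smul c x hx ihx => rw [mul_smul_comm]; exact Submodule.smul_mem _ _ ihx

lemma L2 {j : ℕ} : ∀ a ∈ em F h j, a * aY F h ∈ em F h (j + 1) := by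
  intro a ha
  induction ha using Submodule.span_induction with
  | mem z hz =>
      obtain ⟨q, k, hk, rfl⟩ := hz
      rw [mul_assoc, ← pow_succ]
      exact mem_em F h (by omega)
  | zero => rw [zero_mul]; exact zero_mem _
  | add x y hx hy ihx ihy => rw [add_mul]; exact add_mem ihx ihy
  | smul c x hx ihx => rw [smul_mul_assoc]; exact Submodule.smul_mem _ _ ihx

lemma L2n {j : ℕ} (l : ℕ) : ∀ a ∈ em F h j, a * (aY F h) ^ l ∈ em F h (j + l) := by
  induction l with
  | zero => intro a ha; simpa using ha
  | succ l ih =>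
      intro a ha
      rw [pow_succ, ← mul_assoc, show j + (l + 1) = (j + l) + 1 by omega]
      exact L2 F h _ (ih a ha)

lemma L4 {j : ℕ} : ∀ a ∈ em F h j, aY F h * a ∈ em F h (j + 1) := by
  intro a ha
  induction ha using Submodule.span_induction with
  | mem z hz =>
      obtain ⟨q, k, hk, rfl⟩ := hz
      have key : aY F h * (ev F h q * (aY F h) ^ k)
          = ev F h q * (aY F h) ^ (k + 1) + ev F h (h * derivative q) * (aY F h) ^ k := by
        rw [← mul_assoc, yx_comm, ev_mul, add_mul, mul_assoc, ← pow_succ', mul_assoc]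
      rw [key]
      exact add_mem (mem_em F h (by omega)) (mem_em F h (by omega))
  | zero => rw [mul_zero]; exact zero_mem _
  | add x y hx hy ihx ihy => rw [mul_add]; exact add_mem ihx ihy
  | smul c x hx ihx => rw [mul_smul_comm]; exact Submodule.smul_mem _ _ ihx

lemma Ypow (k : ℕ) (q : F[X]) : (aY F h) ^ k * ev F h q ∈ em F h k := by
  induction k with
  | zero =>
      rw [pow_zero, one_mul]
      simpa using mem_em F h (p := q) (k := 0) (j := 0) le_rfl
  | succ k ih =>
      rw [pow_succ', mul_assoc]
      exact L4 F h _ ih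

lemma mulMem {i j : ℕ} : ∀ a ∈ em F h i, ∀ b ∈ em F h j, a * b ∈ em F h (i + j) := by
  have gen : ∀ (p : F[X]) (k : ℕ), k ≤ i → ∀ b ∈ em F h j,
      (ev F h p * (aY F h) ^ k) * b ∈ em F h (i + j) := by
    intro p k hk b hb
    induction hb using Submodule.span_induction with
    | mem z hz =>
        obtain ⟨q, l, hl, rfl⟩ := hz
        have key : (ev F h p * (aY F h) ^ k) * (ev F h q * (aY F h) ^ l)
            = ev F h p * (((aY F h) ^ k * ev F h q) * (aY F h) ^ l) := by
          simp only [mul_assoc]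
        rw [key]
        exact em_mono F h (add_le_add hk hl)
          (L1 F h p _ (L2n F h l _ (Ypow F h k q)))
    | zero => rw [mul_zero]; exact zero_mem _
    | add x y hx hy ihx ihy => rw [mul_add]; exact add_mem ihx ihy
    | smul c x hx ihx => rw [mul_smul_comm]; exact Submodule.smul_mem _ _ ihx
  intro a ha b hb
  induction ha using Submodule.span_induction with
  | mem z hz =>
      obtain ⟨p, k, hk, rfl⟩ := hz
      exact gen p k hk b hb
  | zero => rw [zero_mul]; exact zero_mem _
  | add x y hx hy ihx ihy => rw [add_mul]; exact add_mem ihx ihy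
  | smul c x hx ihx => rw [smul_mul_assoc]; exact Submodule.smul_mem _ _ ihx

lemma total (a : AW F h) : ∃ j, a ∈ em F h j := by
  obtain ⟨b, rfl⟩ := RingQuot.mkAlgHom_surjective F (ahRel F h) a
  induction b using FreeAlgebra.induction with
  | grade0 r =>
      refine ⟨0, ?_⟩
      have key : (RingQuot.mkAlgHom F (ahRel F h)) (algebraMap F _ r)
          = ev F h (C r) * (aY F h) ^ 0 := by
        simp
      rw [key]; exact mem_em F h le_rfl
  | grade1 i =>
      fin_cases i
      · refine ⟨0, ?_⟩
        show aX F h ∈ em F h 0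
        have key : aX F h = ev F h Polynomial.X * (aY F h) ^ 0 := by
          rw [pow_zero, mul_one]; exact aX_eq F h
        rw [key]
        exact mem_em F h le_rfl
      · refine ⟨1, ?_⟩
        show aY F h ∈ em F h 1
        have key : aY F h = ev F h 1 * (aY F h) ^ 1 := by
          show aY F h = (aeval (aX F h)) (1 : F[X]) * (aY F h) ^ 1
          rw [map_one, one_mul, pow_one]
        rw [key]
        exact mem_em F h le_rfl
  | mul a b iha ihb =>
      obtain ⟨i, hi⟩ := iha
      obtain ⟨j, hj⟩ := ihb
      exact ⟨i + j, by rw [map_mul]; exact mulMem F h _ hi _ hj⟩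
  | add a b iha ihb =>
      obtain ⟨i, hi⟩ := iha
      obtain ⟨j, hj⟩ := ihb
      exact ⟨max i j, by
        rw [map_add]
        exact add_mem (em_mono F h (le_max_left i j) hi)
          (em_mono F h (le_max_right i j) hj)⟩

/-- `ad x` as a linear map. -/
noncomputable def adx : AW F h →ₗ[F] AW F h :=
  LinearMap.mulLeft F (aX F h) - LinearMap.mulRight F (aX F h)

lemma adx_apply (b : AW F h) : adx F h b = aX F h * b - b * aX F h := rfl

/-- `ad y` as a linear map. -/
noncomputable def ady : AW F h →ₗ[F] AW F h :=
  LinearMap.mulLeft F (aY F h) - LinearMap.mulRight F (aY F h)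

lemma ady_apply (b : AW F h) : ady F h b = aY F h * b - b * aY F h := rfl

lemma adx_mul (a b : AW F h) : adx F h (a * b) = adx F h a * b + a * adx F h b := by
  simp only [adx_apply, mul_sub, sub_mul, mul_assoc]
  abel

lemma adx_Y : adx F h (aY F h) = -ev F h h := by
  rw [adx_apply, rel1]; abel

lemma adx_evmul (p : F[X]) (b : AW F h) :
    adx F h (ev F h p * b) = ev F h p * adx F h b := by
  have key : aX F h * (ev F h p * b) = ev F h p * (aX F h * b) := by
    rw [← mul_assoc, commXp, mul_assoc]
  rw [adx_apply, adx_apply, key, mul_assoc, ← mul_sub]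

lemma YkH : ∀ k : ℕ, ∃ e ∈ em F h k,
    (aY F h) ^ (k + 1) * ev F h h = ev F h h * ((aY F h) ^ (k + 1) + e) := by
  intro k
  induction k with
  | zero =>
      refine ⟨ev F h (derivative h), ?_, ?_⟩
      · simpa using mem_em F h (p := derivative h) (k := 0) (j := 0) le_rfl
      · rw [pow_one, yx_comm, mul_add]
  | succ k ih =>
      obtain ⟨e, he, heq⟩ := ih
      refine ⟨aY F h * e + ev F h (derivative h) * (aY F h) ^ (k + 1)
          + ev F h (derivative h) * e, ?_, ?_⟩
      · exact add_mem (add_mem (L4 F h _ he) (mem_em F h (by omega)))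
          (em_mono F h (by omega) (L1 F h _ _ he))
      · calc (aY F h) ^ (k + 2) * ev F h h
            = aY F h * ((aY F h) ^ (k + 1) * ev F h h) := by
              rw [← mul_assoc, ← pow_succ']
          _ = (aY F h * ev F h h) * ((aY F h) ^ (k + 1) + e) := by
              rw [heq, mul_assoc]
          _ = (ev F h h * (aY F h + ev F h (derivative h)))
              * ((aY F h) ^ (k + 1) + e) := by rw [yH]
          _ = ev F h h * ((aY F h * (aY F h) ^ (k + 1))
              + (aY F h * e + ev F h (derivative h) * (aY F h) ^ (k + 1)
                + ev F h (derivative h) * e)) := by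
              simp only [mul_add, add_mul, mul_assoc]; abel
          _ = _ := by rw [← pow_succ']

lemma adxpow : ∀ m : ℕ, ∃ e ∈ em F h m,
    adx F h ((aY F h) ^ (m + 2))
      = ev F h h * ((-((m : F) + 2)) • (aY F h) ^ (m + 1) + e) := by
  intro m
  induction m with
  | zero =>
      refine ⟨-ev F h (derivative h), neg_mem (by
        simpa using mem_em F h (p := derivative h) (k := 0) (j := 0) le_rfl), ?_⟩
      have h2 : adx F h ((aY F h) ^ 2) = -(ev F h h * aY F h) - aY F h * ev F h h := by
        rw [pow_two, adx_mul, adx_Y]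
        rw [awNegMul, awMulNeg]
        abel
      rw [show (0 : ℕ) + 2 = 2 from rfl, show (0 : ℕ) + 1 = 1 from rfl, h2, yx_comm]
      rw [Nat.cast_zero, zero_add, pow_one, mul_add]
      rw [mul_smul_comm, awMulNeg, awNegSmul, awTwoSmul]
      abel
  | succ m ih =>
      obtain ⟨e, he, heq⟩ := ih
      obtain ⟨e', he', heq'⟩ := YkH F h (m + 1)
      rw [show m + 1 + 1 = m + 2 by omega] at heq'
      refine ⟨e * aY F h - e', sub_mem (L2 F h _ he) he', ?_⟩
      have key : adx F h ((aY F h) ^ (m + 3))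
          = adx F h ((aY F h) ^ (m + 2)) * aY F h
            + (aY F h) ^ (m + 2) * adx F h (aY F h) := by
        rw [show m + 3 = (m + 2) + 1 by omega, pow_succ]
        exact adx_mul F h _ _
      rw [show m + 1 + 2 = m + 3 by omega, key, heq, adx_Y, awMulNeg, awAddNeg]
      have hc : ((-((m : F) + 2)) - 1) = -(((m + 1 : ℕ) : F) + 2) := by push_cast; ring
      calc ev F h h * ((-((m : F) + 2)) • (aY F h) ^ (m + 1) + e) * aY F h
            - (aY F h) ^ (m + 2) * ev F h h
          = (-((m : F) + 2)) • (ev F h h * ((aY F h) ^ (m + 1) * aY F h))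
            + ev F h h * (e * aY F h)
            - (aY F h) ^ (m + 2) * ev F h h := by
            rw [mul_add, add_mul, mul_assoc, smul_mul_assoc, mul_smul_comm, mul_assoc]
        _ = (-((m : F) + 2)) • (ev F h h * (aY F h) ^ (m + 2)) + ev F h h * (e * aY F h)
            - (aY F h) ^ (m + 2) * ev F h h := by
            rw [← pow_succ, show m + 1 + 1 = m + 2 by omega]
        _ = (-((m : F) + 2)) • (ev F h h * (aY F h) ^ (m + 2)) + ev F h h * (e * aY F h)
            - ev F h h * ((aY F h) ^ (m + 2) + e') := by rw [heq']
        _ = ev F h h * (((-((m : F) + 2)) - 1) • (aY F h) ^ (m + 2)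
            + (e * aY F h - e')) := by
            rw [mul_add, mul_add, mul_sub, mul_smul_comm, awSubSmul, awOneSmul]
            abel
        _ = _ := by rw [hc]

lemma hMemAdx [CharZero F] : ∀ j : ℕ, ∀ z ∈ em F h j,
    ev F h h * z ∈ LinearMap.range (adx F h) := by
  intro j
  induction j with
  | zero =>
      intro z hz
      induction hz using Submodule.span_induction with
      | mem z hzz =>
          obtain ⟨p, k, hk, rfl⟩ := hzz
          have hk0 : k = 0 := Nat.le_zero.mp hk
          subst hk0
          refine ⟨-(aY F h * ev F h p), ?_⟩
          have hneg : adx F h (-(aY F h * ev F h p))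
              = -(adx F h (aY F h * ev F h p)) := map_neg _ _
          rw [hneg, adx_apply]
          calc -(aX F h * (aY F h * ev F h p) - aY F h * ev F h p * aX F h)
              = aY F h * (ev F h p * aX F h) - aX F h * (aY F h * ev F h p) := by
                rw [awNegSub]
                simp only [mul_assoc]
            _ = aY F h * (aX F h * ev F h p) - aX F h * (aY F h * ev F h p) := by
                rw [commXp]
            _ = (aY F h * aX F h) * ev F h p - aX F h * (aY F h * ev F h p) := by
                rw [← mul_assoc]
            _ = (aX F h * aY F h + ev F h h) * ev F h p
                - aX F h * (aY F h * ev F h p) := by rw [rel1]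
            _ = ev F h h * ev F h p := by
                simp only [add_mul, mul_assoc]; abel
            _ = ev F h h * (ev F h p * (aY F h) ^ 0) := by rw [pow_zero, mul_one]
      | zero => rw [mul_zero]; exact zero_mem _
      | add x y hx hy ihx ihy => rw [mul_add]; exact add_mem ihx ihy
      | smul c x hx ihx => rw [mul_smul_comm]; exact Submodule.smul_mem _ _ ihx
  | succ j ih =>
      intro z hz
      induction hz using Submodule.span_induction with
      | mem z hzz =>
          obtain ⟨p, k, hk, rfl⟩ := hzz
          rcases Nat.lt_or_ge k (j + 1) with hlt | hge
          · exact ih _ (mem_em F h (by omega))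
          · have hkk : k = j + 1 := by omega
            subst hkk
            obtain ⟨e, he, heq⟩ := adxpow F h j
            set c : F := -((j : F) + 2) with hcdef
            have hc0 : c ≠ 0 := by
              rw [hcdef, neg_ne_zero,
                show ((j : F) + 2) = ((j + 2 : ℕ) : F) by push_cast; ring]
              exact Nat.cast_ne_zero.mpr (by omega)
            have key : adx F h (ev F h p * (aY F h) ^ (j + 2))
                = c • (ev F h h * (ev F h p * (aY F h) ^ (j + 1)))
                  + ev F h h * (ev F h p * e) := by
              rw [adx_evmul, heq]
              calc ev F h p * (ev F h h * (c • (aY F h) ^ (j + 1) + e))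
                  = (ev F h p * ev F h h) * (c • (aY F h) ^ (j + 1) + e) := by
                    rw [mul_assoc]
                _ = (ev F h h * ev F h p) * (c • (aY F h) ^ (j + 1) + e) := by
                    rw [ev_comm]
                _ = c • (ev F h h * (ev F h p * (aY F h) ^ (j + 1)))
                    + ev F h h * (ev F h p * e) := by
                    simp only [mul_add, mul_smul_comm, mul_assoc]
            have hT : ev F h h * (ev F h p * (aY F h) ^ (j + 1))
                = c⁻¹ • (adx F h (ev F h p * (aY F h) ^ (j + 2))
                    - ev F h h * (ev F h p * e)) := by
              rw [key, add_sub_cancel_right, awSmulSmul, inv_mul_cancel₀ hc0, awOneSmul]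
            rw [hT]
            exact Submodule.smul_mem _ _
              (sub_mem ⟨_, rfl⟩ (ih _ (L1 F h p _ he)))
      | zero => rw [mul_zero]; exact zero_mem _
      | add x y hx hy ihx ihy => rw [mul_add]; exact add_mem ihx ihy
      | smul c x hx ihx => rw [mul_smul_comm]; exact Submodule.smul_mem _ _ ihx

lemma hAllAdx [CharZero F] (c : AW F h) :
    ev F h h * c ∈ LinearMap.range (adx F h) := by
  obtain ⟨j, hj⟩ := total F h c
  exact hMemAdx F h j c hj

lemma antider [CharZero F] (q : F[X]) : ∃ p : F[X], derivative p = q := by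
  induction q using Polynomial.induction_on' with
  | add p q hp hq =>
      obtain ⟨P, hP⟩ := hp
      obtain ⟨Q, hQ⟩ := hq
      exact ⟨P + Q, by rw [derivative_add, hP, hQ]⟩
  | monomial n a =>
      refine ⟨monomial (n + 1) (a / ((n : F) + 1)), ?_⟩
      rw [derivative_monomial]
      have h1 : ((n : F) + 1) ≠ 0 := by
        rw [show ((n : F) + 1) = ((n + 1 : ℕ) : F) by push_cast; ring]
        exact Nat.cast_ne_zero.mpr (by omega)
      rw [show n + 1 - 1 = n by omega]
      congr 1
      rw [show ((n + 1 : ℕ) : F) = (n : F) + 1 by push_cast; ring]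
      field_simp

lemma ady_calc (p : F[X]) (k : ℕ) :
    ady F h (ev F h p * (aY F h) ^ k)
      = ev F h h * (ev F h (derivative p) * (aY F h) ^ k) := by
  have h1 : aY F h * (ev F h p * (aY F h) ^ k)
      = (ev F h p * aY F h + ev F h h * ev F h (derivative p)) * (aY F h) ^ k := by
    rw [← mul_assoc, yx_comm]
  rw [ady_apply, h1, add_mul, mul_assoc, mul_assoc, mul_assoc, ← pow_succ', ← pow_succ]
  abel

lemma hMemAdy [CharZero F] (c : AW F h) :
    ev F h h * c ∈ LinearMap.range (ady F h) := by
  obtain ⟨j, hj⟩ := total F h c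
  induction hj using Submodule.span_induction with
  | mem z hz =>
      obtain ⟨p, k, hk, rfl⟩ := hz
      obtain ⟨P, hP⟩ := antider F p
      exact ⟨ev F h P * (aY F h) ^ k, by rw [ady_calc, hP]⟩
  | zero => rw [mul_zero]; exact zero_mem _
  | add x y hx hy ihx ihy => rw [mul_add]; exact add_mem ihx ihy
  | smul c x hx ihx => rw [mul_smul_comm]; exact Submodule.smul_mem _ _ ihx

lemma leftH : ∀ a : AW F h, ∃ d, a * ev F h h = ev F h h * d := by
  intro a
  obtain ⟨a, rfl⟩ := RingQuot.mkAlgHom_surjective F (ahRel F h) a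
  induction a using FreeAlgebra.induction with
  | grade0 r =>
      refine ⟨algebraMap F _ r, ?_⟩
      rw [AlgHom.commutes]
      exact Algebra.commutes r _
  | grade1 i =>
      fin_cases i
      · exact ⟨aX F h, commXp F h h⟩
      · exact ⟨aY F h + ev F h (derivative h), yH F h⟩
  | mul a b iha ihb =>
      obtain ⟨d1, hd1⟩ := iha
      obtain ⟨d2, hd2⟩ := ihb
      refine ⟨d1 * d2, ?_⟩
      rw [map_mul, mul_assoc, hd2, ← mul_assoc, hd1, mul_assoc]
  | add a b iha ihb =>
      obtain ⟨d1, hd1⟩ := iha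
      obtain ⟨d2, hd2⟩ := ihb
      refine ⟨d1 + d2, ?_⟩
      rw [map_add, add_mul, hd1, hd2, mul_add]

lemma xyEq : aX F h * aY F h - aY F h * aX F h = ev F h h * (-1) := by
  rw [rel1, awMulNeg, mul_one]; abel

lemma yxEq : aY F h * aX F h - aX F h * aY F h = ev F h h * 1 := by
  rw [rel1, mul_one]; abel

lemma adxI : ∀ b : AW F h, ∃ c, aX F h * b - b * aX F h = ev F h h * c := by
  intro b
  obtain ⟨b, rfl⟩ := RingQuot.mkAlgHom_surjective F (ahRel F h) b
  induction b using FreeAlgebra.induction with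
  | grade0 r =>
      refine ⟨0, ?_⟩
      rw [AlgHom.commutes, Algebra.commutes, sub_self, mul_zero]
  | grade1 i =>
      fin_cases i
      · exact ⟨0, by
          show aX F h * aX F h - aX F h * aX F h = ev F h h * 0
          rw [sub_self, mul_zero]⟩
      · exact ⟨-1, xyEq F h⟩
  | mul a b iha ihb =>
      obtain ⟨c1, hc1⟩ := iha
      obtain ⟨c2, hc2⟩ := ihb
      obtain ⟨d, hd⟩ := leftH F h (RingQuot.mkAlgHom F (ahRel F h) a)
      refine ⟨c1 * RingQuot.mkAlgHom F (ahRel F h) b + d * c2, ?_⟩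
      rw [map_mul]
      set A := (RingQuot.mkAlgHom F (ahRel F h)) a with hA
      set B := (RingQuot.mkAlgHom F (ahRel F h)) b with hB
      calc aX F h * (A * B) - (A * B) * aX F h
          = (aX F h * A - A * aX F h) * B + A * (aX F h * B - B * aX F h) := by
            simp only [mul_sub, sub_mul, mul_assoc]; abel
        _ = (ev F h h * c1) * B + A * (ev F h h * c2) := by rw [hc1, hc2]
        _ = ev F h h * (c1 * B) + (A * ev F h h) * c2 := by
            rw [mul_assoc, ← mul_assoc A]
        _ = ev F h h * (c1 * B) + (ev F h h * d) * c2 := by rw [hd]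
        _ = ev F h h * (c1 * B + d * c2) := by rw [mul_add, mul_assoc]
  | add a b iha ihb =>
      obtain ⟨c1, hc1⟩ := iha
      obtain ⟨c2, hc2⟩ := ihb
      refine ⟨c1 + c2, ?_⟩
      rw [map_add]
      set A := (RingQuot.mkAlgHom F (ahRel F h)) a with hA
      set B := (RingQuot.mkAlgHom F (ahRel F h)) b with hB
      calc aX F h * (A + B) - (A + B) * aX F h
          = (aX F h * A - A * aX F h) + (aX F h * B - B * aX F h) := by
            rw [mul_add, add_mul]; abel
        _ = ev F h h * c1 + ev F h h * c2 := by rw [hc1, hc2]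
        _ = ev F h h * (c1 + c2) := by rw [mul_add]

lemma adyI : ∀ b : AW F h, ∃ c, aY F h * b - b * aY F h = ev F h h * c := by
  intro b
  obtain ⟨b, rfl⟩ := RingQuot.mkAlgHom_surjective F (ahRel F h) b
  induction b using FreeAlgebra.induction with
  | grade0 r =>
      refine ⟨0, ?_⟩
      rw [AlgHom.commutes, Algebra.commutes, sub_self, mul_zero]
  | grade1 i =>
      fin_cases i
      · exact ⟨1, yxEq F h⟩
      · exact ⟨0, by
          show aY F h * aY F h - aY F h * aY F h = ev F h h * 0
          rw [sub_self, mul_zero]⟩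
  | mul a b iha ihb =>
      obtain ⟨c1, hc1⟩ := iha
      obtain ⟨c2, hc2⟩ := ihb
      obtain ⟨d, hd⟩ := leftH F h (RingQuot.mkAlgHom F (ahRel F h) a)
      refine ⟨c1 * RingQuot.mkAlgHom F (ahRel F h) b + d * c2, ?_⟩
      rw [map_mul]
      set A := (RingQuot.mkAlgHom F (ahRel F h)) a with hA
      set B := (RingQuot.mkAlgHom F (ahRel F h)) b with hB
      calc aY F h * (A * B) - (A * B) * aY F h
          = (aY F h * A - A * aY F h) * B + A * (aY F h * B - B * aY F h) := by
            simp only [mul_sub, sub_mul, mul_assoc]; abel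
        _ = (ev F h h * c1) * B + A * (ev F h h * c2) := by rw [hc1, hc2]
        _ = ev F h h * (c1 * B) + (A * ev F h h) * c2 := by
            rw [mul_assoc, ← mul_assoc A]
        _ = ev F h h * (c1 * B) + (ev F h h * d) * c2 := by rw [hd]
        _ = ev F h h * (c1 * B + d * c2) := by rw [mul_add, mul_assoc]
  | add a b iha ihb =>
      obtain ⟨c1, hc1⟩ := iha
      obtain ⟨c2, hc2⟩ := ihb
      refine ⟨c1 + c2, ?_⟩
      rw [map_add]
      set A := (RingQuot.mkAlgHom F (ahRel F h)) a with hA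
      set B := (RingQuot.mkAlgHom F (ahRel F h)) b with hB
      calc aY F h * (A + B) - (A + B) * aY F h
          = (aY F h * A - A * aY F h) + (aY F h * B - B * aY F h) := by
            rw [mul_add, add_mul]; abel
        _ = ev F h h * c1 + ev F h h * c2 := by rw [hc1, hc2]
        _ = ev F h h * (c1 + c2) := by rw [mul_add]

lemma commI : ∀ a b : AW F h, ∃ c, a * b - b * a = ev F h h * c := by
  intro a b
  obtain ⟨a, rfl⟩ := RingQuot.mkAlgHom_surjective F (ahRel F h) a
  induction a using FreeAlgebra.induction with
  | grade0 r =>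
      refine ⟨0, ?_⟩
      rw [AlgHom.commutes, Algebra.commutes, sub_self, mul_zero]
  | grade1 i =>
      fin_cases i
      · exact adxI F h b
      · exact adyI F h b
  | mul a a' iha iha' =>
      obtain ⟨c1, hc1⟩ := iha
      obtain ⟨c2, hc2⟩ := iha'
      obtain ⟨d, hd⟩ := leftH F h (RingQuot.mkAlgHom F (ahRel F h) a)
      refine ⟨d * c2 + c1 * RingQuot.mkAlgHom F (ahRel F h) a', ?_⟩
      rw [map_mul]
      set A := (RingQuot.mkAlgHom F (ahRel F h)) a with hA
      set A' := (RingQuot.mkAlgHom F (ahRel F h)) a' with hA'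
      calc (A * A') * b - b * (A * A')
          = A * (A' * b - b * A') + (A * b - b * A) * A' := by
            simp only [mul_sub, sub_mul, mul_assoc]; abel
        _ = A * (ev F h h * c2) + (ev F h h * c1) * A' := by rw [hc2, hc1]
        _ = (A * ev F h h) * c2 + ev F h h * (c1 * A') := by
            rw [← mul_assoc A, mul_assoc (ev F h h)]
        _ = (ev F h h * d) * c2 + ev F h h * (c1 * A') := by rw [hd]
        _ = ev F h h * (d * c2 + c1 * A') := by rw [mul_add, mul_assoc]
  | add a a' iha iha' =>
      obtain ⟨c1, hc1⟩ := iha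
      obtain ⟨c2, hc2⟩ := iha'
      refine ⟨c1 + c2, ?_⟩
      rw [map_add]
      set A := (RingQuot.mkAlgHom F (ahRel F h)) a with hA
      set A' := (RingQuot.mkAlgHom F (ahRel F h)) a' with hA'
      calc (A + A') * b - b * (A + A')
          = (A * b - b * A) + (A' * b - b * A') := by
            rw [mul_add, add_mul]; abel
        _ = ev F h h * c1 + ev F h h * c2 := by rw [hc1, hc2]
        _ = ev F h h * (c1 + c2) := by rw [mul_add]

end AhAux

/-- In characteristic 0 (`h ≠ 0`): `h·A_h = [x, A_h] = [ŷ, A_h] = [A_h, A_h]`. -/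
theorem stmt10 (F : Type) [Field F] [CharZero F] (h : F[X]) (hh : h ≠ 0) :
    ({z : AW F h | ∃ c, z = aeval (aX F h) h * c} =
      {z : AW F h | ∃ b, z = aX F h * b - b * aX F h}) ∧
    ({z : AW F h | ∃ b, z = aX F h * b - b * aX F h} =
      {z : AW F h | ∃ b, z = aY F h * b - b * aY F h}) ∧
    ({z : AW F h | ∃ b, z = aY F h * b - b * aY F h} =
      ↑(Submodule.span F {z : AW F h | ∃ a b, z = a * b - b * a})) := by
  have e1 : {z : AW F h | ∃ c, z = aeval (aX F h) h * c} =
      {z : AW F h | ∃ b, z = aX F h * b - b * aX F h} := by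
    ext z
    constructor
    · rintro ⟨c, rfl⟩
      obtain ⟨b, hb⟩ := AhAux.hAllAdx F h c
      rw [AhAux.adx_apply] at hb
      exact ⟨b, hb.symm⟩
    · rintro ⟨b, rfl⟩
      obtain ⟨c, hc⟩ := AhAux.adxI F h b
      exact ⟨c, hc⟩
  have e2 : {z : AW F h | ∃ b, z = aY F h * b - b * aY F h} =
      {z : AW F h | ∃ c, z = aeval (aX F h) h * c} := by
    ext z
    constructor
    · rintro ⟨b, rfl⟩
      obtain ⟨c, hc⟩ := AhAux.adyI F h b
      exact ⟨c, hc⟩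
    · rintro ⟨c, rfl⟩
      obtain ⟨b, hb⟩ := AhAux.hMemAdy F h c
      rw [AhAux.ady_apply] at hb
      exact ⟨b, hb.symm⟩
  refine ⟨e1, ?_, ?_⟩
  · rw [← e1, e2]
  · apply Set.Subset.antisymm
    · rintro z ⟨b, rfl⟩
      exact Submodule.subset_span ⟨aY F h, b, rfl⟩
    · intro z hz
      have hle : Submodule.span F {z : AW F h | ∃ a b, z = a * b - b * a}
          ≤ LinearMap.range (AhAux.ady F h) := by
        rw [Submodule.span_le]
        rintro w ⟨a, b, rfl⟩
        obtain ⟨c, hc⟩ := AhAux.commI F h a b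
        rw [hc]
        exact AhAux.hMemAdy F h c
      obtain ⟨b, hb⟩ := hle hz
      rw [AhAux.ady_apply] at hb
      exact ⟨b, hb.symm⟩
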